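/- arXiv:0706.1300 — 2 statements merged into one kernel-verified Lean document; each statement's English description precedes it below -/
import Mathlib

section
/- Let ω(t,z) = K e^z Φ(z t^{−1/2} + (r + 1/2) t^{1/2}) − K e^{−rt} Φ(z t^{−1/2} + (r − 1/2) t^{1/2}), with K > 0, r > 0, z ∈ ℝ, t > 0. Then ω satisfies the PDE ∂ω/∂t = (1/2) ∂²ω/∂z² + (r − 1/2) ∂ω/∂z − r ω. -/
/-!
Write `d± = z/√t + (r ± 1/2)√t`, so that `d₊ = d₋ + √t` and `d₊² - d₋² = 2z + 2rt`. Hence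
`e^z φ(d₊) = e^{-rt} φ(d₋)` for the standard normal density `φ`. Because of this identity the
density terms cancel in `∂_z ω = K e^z Φ(d₊)`, and in `∂_t ω` they combine to
`K e^z φ(d₊) (∂_t d₊ - ∂_t d₋) = K e^z φ(d₊) / (2√t)`, which is exactly the density term of
`½ ∂²_z ω`; everything else matches by linear algebra.
-/

open Real

/-- The standard normal cumulative distribution function. -/
noncomputable def stdNormalCDF (x : ℝ) : ℝ :=
  (Real.sqrt (2 * Real.pi))⁻¹ * ∫ y in Set.Iio x, Real.exp (-y ^ 2 / 2)

open MeasureTheory Set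

theorem hasDerivAt_integral_Iio {E : Type*} [NormedAddCommGroup E] [NormedSpace ℝ E]
    [CompleteSpace E] {f : ℝ → E} (hf : Continuous f) (hfi : Integrable f) (x : ℝ) :
    HasDerivAt (fun u => ∫ y in Iio u, f y) (f x) x := by
  have hsplit : (fun u => ∫ y in Iio u, f y) = fun u => (∫ y in Iic 0, f y) + ∫ y in 0..u, f y := by
    funext u
    rw [← integral_Iic_eq_integral_Iio,
      ← intervalIntegral.integral_Iic_sub_Iic hfi.integrableOn hfi.integrableOn]
    abel
  rw [hsplit]
  exact (hf.integral_hasStrictDerivAt 0 x).hasDerivAt.const_add _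

noncomputable def stdNormalPDF (x : ℝ) : ℝ :=
  (√(2 * π))⁻¹ * exp (-x ^ 2 / 2)

theorem hasDerivAt_stdNormalCDF (x : ℝ) : HasDerivAt stdNormalCDF (stdNormalPDF x) x := by
  have hcont : Continuous fun y : ℝ => exp (-y ^ 2 / 2) := by fun_prop
  have hint : Integrable fun y : ℝ => exp (-y ^ 2 / 2) := by
    simpa [neg_div, div_eq_inv_mul] using integrable_exp_neg_mul_sq (b := 1 / 2) (by norm_num)
  exact (hasDerivAt_integral_Iio hcont hint x).const_mul _

theorem HasDerivAt.stdNormalCDF {f : ℝ → ℝ} {f' x : ℝ} (hf : HasDerivAt f f' x) :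
    HasDerivAt (fun y => stdNormalCDF (f y)) (stdNormalPDF (f x) * f') x :=
  (hasDerivAt_stdNormalCDF (f x)).comp x hf

theorem exp_mul_stdNormalPDF_eq {t : ℝ} (ht : 0 < t) (r z : ℝ) :
    exp z * stdNormalPDF (z / √t + (r + 1 / 2) * √t)
      = exp (-r * t) * stdNormalPDF (z / √t + (r - 1 / 2) * √t) := by
  have hs : √t ≠ 0 := (sqrt_pos.mpr ht).ne'
  have hexp : z + -(z / √t + (r + 1 / 2) * √t) ^ 2 / 2
      = -r * t + -(z / √t + (r - 1 / 2) * √t) ^ 2 / 2 := by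
    field_simp
    linear_combination (-8 * r * √t ^ 2) * mul_self_sqrt ht.le
  rw [stdNormalPDF, stdNormalPDF, mul_left_comm, ← exp_add, hexp, exp_add, mul_left_comm]

theorem hasDerivAt_div_sqrt_add_mul_sqrt {t : ℝ} (ht : 0 < t) (z c : ℝ) :
    HasDerivAt (fun s => z / √s + c * √s) ((c - z / t) / (2 * √t)) t := by
  have hs : √t ≠ 0 := (sqrt_pos.mpr ht).ne'
  have hsqrt := hasDerivAt_sqrt ht.ne'
  refine (((hsqrt.inv hs).const_mul z).add (hsqrt.const_mul c)).congr_deriv ?_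
  field_simp
  rw [sq_sqrt ht.le]
  ring

theorem hasDerivAt_exp_mul_stdNormalCDF (K c t z : ℝ) :
    HasDerivAt (fun y => K * exp y * stdNormalCDF (y / √t + c * √t))
      (K * exp z * stdNormalCDF (z / √t + c * √t)
        + K * exp z * stdNormalPDF (z / √t + c * √t) / √t) z := by
  have harg : HasDerivAt (fun y => y / √t + c * √t) (1 / √t) z :=
    ((hasDerivAt_id z).div_const _).add_const _
  refine (((hasDerivAt_exp z).const_mul K).mul harg.stdNormalCDF).congr_deriv ?_
  ring

noncomputable def logPriceCall (K r t z : ℝ) : ℝ :=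
  K * exp z * stdNormalCDF (z / √t + (r + 1 / 2) * √t)
    - K * exp (-r * t) * stdNormalCDF (z / √t + (r - 1 / 2) * √t)

theorem hasDerivAt_logPriceCall_z {K r t : ℝ} (ht : 0 < t) (z : ℝ) :
    HasDerivAt (logPriceCall K r t) (K * exp z * stdNormalCDF (z / √t + (r + 1 / 2) * √t)) z := by
  have harg : HasDerivAt (fun y => y / √t + (r - 1 / 2) * √t) (1 / √t) z :=
    ((hasDerivAt_id z).div_const _).add_const _
  refine ((hasDerivAt_exp_mul_stdNormalCDF K (r + 1 / 2) t z).sub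
    (harg.stdNormalCDF.const_mul (K * exp (-r * t)))).congr_deriv ?_
  linear_combination (K / √t) * exp_mul_stdNormalPDF_eq ht r z

theorem deriv_logPriceCall_z {K r t : ℝ} (ht : 0 < t) :
    deriv (logPriceCall K r t) = fun z => K * exp z * stdNormalCDF (z / √t + (r + 1 / 2) * √t) :=
  funext fun z => (hasDerivAt_logPriceCall_z ht z).deriv

theorem hasDerivAt_logPriceCall_t {K r t : ℝ} (ht : 0 < t) (z : ℝ) :
    HasDerivAt (fun s => logPriceCall K r s z)
      (K * exp z * stdNormalPDF (z / √t + (r + 1 / 2) * √t) / (2 * √t)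
        + r * K * exp (-r * t) * stdNormalCDF (z / √t + (r - 1 / 2) * √t)) t := by
  have hdiscount : HasDerivAt (fun s => K * exp (-r * s)) (K * (exp (-r * t) * -r)) t :=
    (((hasDerivAt_id t).const_mul (-r)).exp.const_mul K).congr_deriv (by simp)
  refine (((hasDerivAt_div_sqrt_add_mul_sqrt ht z (r + 1 / 2)).stdNormalCDF.const_mul
    (K * exp z)).sub (hdiscount.mul
      (hasDerivAt_div_sqrt_add_mul_sqrt ht z (r - 1 / 2)).stdNormalCDF)).congr_deriv ?_
  linear_combination (K * ((r - 1 / 2 - z / t) / (2 * √t))) * exp_mul_stdNormalPDF_eq ht r z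

theorem logPrice_blackScholes_pde_general (K r : ℝ)
    (ω : ℝ → ℝ → ℝ)
    (hω : ∀ t z, ω t z =
      K * Real.exp z * stdNormalCDF (z / Real.sqrt t + (r + 1 / 2) * Real.sqrt t)
      - K * Real.exp (-r * t) * stdNormalCDF (z / Real.sqrt t + (r - 1 / 2) * Real.sqrt t)) :
    ∀ t > (0 : ℝ), ∀ z : ℝ,
      deriv (fun s => ω s z) t =
        1 / 2 * deriv (fun y => deriv (fun y' => ω t y') y) z
          + (r - 1 / 2) * deriv (fun y => ω t y) z - r * ω t z := by
  obtain rfl : ω = logPriceCall K r := funext₂ hω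
  intro t ht z
  rw [(hasDerivAt_logPriceCall_t ht z).deriv, deriv_logPriceCall_z ht,
    (hasDerivAt_exp_mul_stdNormalCDF K (r + 1 / 2) t z).deriv, logPriceCall]
  ring

/-- The log-price Black–Scholes solution
`ω(t,z) = K e^z Φ(z/√t + (r+1/2)√t) − K e^{−rt} Φ(z/√t + (r−1/2)√t)`
satisfies `∂ω/∂t = (1/2) ∂²ω/∂z² + (r − 1/2) ∂ω/∂z − r ω` for `t > 0`. -/
theorem logPrice_blackScholes_pde (K r : ℝ) (hK : 0 < K) (hr : 0 < r)
    (ω : ℝ → ℝ → ℝ)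
    (hω : ∀ t z, ω t z =
      K * Real.exp z * stdNormalCDF (z / Real.sqrt t + (r + 1 / 2) * Real.sqrt t)
      - K * Real.exp (-r * t) * stdNormalCDF (z / Real.sqrt t + (r - 1 / 2) * Real.sqrt t)) :
    ∀ t > (0 : ℝ), ∀ z : ℝ,
      deriv (fun s => ω s z) t =
        1 / 2 * deriv (fun y => deriv (fun y' => ω t y') y) z
          + (r - 1 / 2) * deriv (fun y => ω t y) z - r * ω t z :=
  logPrice_blackScholes_pde_general K r ω hω
end

section
/- With ω(t,z) = K e^z Φ(z/√t + (r+1/2)√t) − K e^{−rt} Φ(z/√t + (r−1/2)√t) and K, r > 0: for every fixed z ∈ ℝ, lim_{t→0⁺} ω(t,z) = max(K e^z − K, 0). -/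
open Real Filter Topology

/-!
As `t → 0⁺`, the argument `z / √t + c * √t` tends to `+∞`, `-∞` or `0` according to the
sign of `z`, whatever `c` is, so both `Φ`-terms tend to `(1 + sign z) / 2` while `e^{-rt} → 1`.
The limit `K (e^z - 1) (1 + sign z) / 2` is the payoff `max (K e^z - K) 0` since `e^z - 1` has
the sign of `z`.
-/

open MeasureTheory ProbabilityTheory Set

lemma integrable_exp_neg_sq_div_two : Integrable fun y : ℝ => exp (-y ^ 2 / 2) := by
  simpa [div_eq_inv_mul, neg_mul, mul_comm] using
    integrable_exp_neg_mul_sq (b := 1 / 2) (by norm_num)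

lemma stdNormalCDF_eq_cdf_gaussianReal : stdNormalCDF = cdf (gaussianReal 0 1) := by
  funext x
  rw [cdf_eq_real, measureReal_def, gaussianReal_apply_eq_integral _ one_ne_zero,
    ENNReal.toReal_ofReal
      (setIntegral_nonneg measurableSet_Iic fun y _ => gaussianPDFReal_nonneg _ _ _),
    integral_Iic_eq_integral_Iio, stdNormalCDF, ← integral_const_mul]
  simp [gaussianPDFReal]

lemma tendsto_stdNormalCDF_atTop : Tendsto stdNormalCDF atTop (𝓝 1) :=
  stdNormalCDF_eq_cdf_gaussianReal ▸ tendsto_cdf_atTop _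

lemma tendsto_stdNormalCDF_atBot : Tendsto stdNormalCDF atBot (𝓝 0) :=
  stdNormalCDF_eq_cdf_gaussianReal ▸ tendsto_cdf_atBot _

lemma continuous_stdNormalCDF : Continuous stdNormalCDF := by
  have hint := integrable_exp_neg_sq_div_two
  have h : stdNormalCDF = fun x => (√(2 * π))⁻¹ *
      ((∫ y in Iic 0, exp (-y ^ 2 / 2)) + ∫ y in (0 : ℝ)..x, exp (-y ^ 2 / 2)) := by
    funext x
    rw [stdNormalCDF, ← integral_Iic_eq_integral_Iio,
      ← intervalIntegral.integral_Iic_sub_Iic hint.integrableOn hint.integrableOn]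
    ring
  rw [h]
  exact continuous_const.mul (continuous_const.add
    (intervalIntegral.continuous_primitive (fun _ _ => hint.intervalIntegrable) 0))

lemma stdNormalCDF_zero : stdNormalCDF 0 = 1 / 2 := by
  have hsymm :
      ∫ y in Iio (0 : ℝ), exp (-y ^ 2 / 2) = ∫ y in Ioi (0 : ℝ), exp (-y ^ 2 / 2) := by
    rw [← integral_Iic_eq_integral_Iio, ← neg_zero, ← integral_comp_neg_Ioi]
    simp
  have hhalf : ∫ y in Ioi (0 : ℝ), exp (-y ^ 2 / 2) = √(2 * π) / 2 := by
    simpa [div_eq_inv_mul, neg_mul, mul_comm, div_inv_eq_mul] using integral_gaussian_Ioi (1 / 2)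
  rw [stdNormalCDF, hsymm, hhalf]
  field_simp

lemma tendsto_sqrt_nhdsGT_zero : Tendsto sqrt (𝓝[>] 0) (𝓝[>] 0) :=
  tendsto_nhdsWithin_of_tendsto_nhds_of_eventually_within _
    (by simpa using (continuous_sqrt.tendsto 0).mono_left nhdsWithin_le_nhds)
    (eventually_nhdsWithin_of_forall fun _ ht => sqrt_pos.2 ht)

lemma tendsto_div_sqrt_add_mul_sqrt_atTop {z : ℝ} (hz : 0 < z) (c : ℝ) :
    Tendsto (fun t => z / √t + c * √t) (𝓝[>] 0) atTop := by
  simp only [div_eq_mul_inv]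
  exact ((tendsto_inv_nhdsGT_zero.comp tendsto_sqrt_nhdsGT_zero).const_mul_atTop hz).atTop_add
    ((tendsto_sqrt_nhdsGT_zero.mono_right nhdsWithin_le_nhds).const_mul c)

lemma tendsto_div_sqrt_add_mul_sqrt_atBot {z : ℝ} (hz : z < 0) (c : ℝ) :
    Tendsto (fun t => z / √t + c * √t) (𝓝[>] 0) atBot := by
  simp only [div_eq_mul_inv]
  exact
    ((tendsto_inv_nhdsGT_zero.comp tendsto_sqrt_nhdsGT_zero).const_mul_atTop_of_neg hz).atBot_add
    ((tendsto_sqrt_nhdsGT_zero.mono_right nhdsWithin_le_nhds).const_mul c)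

lemma tendsto_stdNormalCDF_div_sqrt_add_mul_sqrt (z c : ℝ) :
    Tendsto (fun t => stdNormalCDF (z / √t + c * √t)) (𝓝[>] 0)
      (𝓝 ((1 + Real.sign z) / 2)) := by
  rcases lt_trichotomy z 0 with hz | rfl | hz
  · simpa [Function.comp_def, Real.sign_of_neg hz] using
      tendsto_stdNormalCDF_atBot.comp (tendsto_div_sqrt_add_mul_sqrt_atBot hz c)
  · have hc : Tendsto (fun t => c * √t) (𝓝[>] 0) (𝓝 0) := by
      simpa using (tendsto_sqrt_nhdsGT_zero.mono_right nhdsWithin_le_nhds).const_mul c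
    simpa [Function.comp_def, stdNormalCDF_zero] using (continuous_stdNormalCDF.tendsto 0).comp hc
  · simpa [Function.comp_def, Real.sign_of_pos hz, one_add_one_eq_two] using
      tendsto_stdNormalCDF_atTop.comp (tendsto_div_sqrt_add_mul_sqrt_atTop hz c)

lemma exp_sub_one_mul_one_add_sign_div_two (z : ℝ) :
    (exp z - 1) * ((1 + Real.sign z) / 2) = max (exp z - 1) 0 := by
  rcases lt_trichotomy z 0 with hz | rfl | hz
  · rw [Real.sign_of_neg hz, max_eq_right (by linarith [exp_lt_one_iff.2 hz])]
    ring
  · simp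
  · rw [Real.sign_of_pos hz, max_eq_left (by linarith [one_lt_exp_iff.2 hz])]
    ring

theorem logPrice_blackScholes_initial_general (K r : ℝ) (hK : 0 < K)
    (ω : ℝ → ℝ → ℝ)
    (hω : ∀ t z, ω t z =
      K * Real.exp z * stdNormalCDF (z / Real.sqrt t + (r + 1 / 2) * Real.sqrt t)
      - K * Real.exp (-r * t) * stdNormalCDF (z / Real.sqrt t + (r - 1 / 2) * Real.sqrt t)) :
    ∀ z : ℝ, Tendsto (fun t => ω t z) (nhdsWithin 0 (Set.Ioi 0))
      (nhds (max (K * Real.exp z - K) 0)) := by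
  intro z
  have hdiscount : Tendsto (fun t => exp (-r * t)) (𝓝[>] 0) (𝓝 1) := by
    simpa [Function.comp_def] using
      ((continuous_exp.comp (continuous_const_mul (-r))).tendsto 0).mono_left nhdsWithin_le_nhds
  have hΦ₁ := tendsto_stdNormalCDF_div_sqrt_add_mul_sqrt z (r + 1 / 2)
  have hΦ₂ := tendsto_stdNormalCDF_div_sqrt_add_mul_sqrt z (r - 1 / 2)
  have hlim := (hΦ₁.const_mul (K * exp z)).sub ((hdiscount.const_mul K).mul hΦ₂)
  have hvalue : K * exp z * ((1 + Real.sign z) / 2) - K * 1 * ((1 + Real.sign z) / 2)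
      = max (K * exp z - K) 0 := by
    rw [show K * exp z - K = K * (exp z - 1) by ring, ← mul_zero K,
      ← mul_max_of_nonneg _ _ hK.le, ← exp_sub_one_mul_one_add_sign_div_two]
    ring
  rw [← hvalue]
  simpa only [hω] using hlim

/-- The log-price Black–Scholes solution satisfies the terminal condition
`ω(t,z) → max(K e^z − K, 0)` as `t → 0⁺`. -/
theorem logPrice_blackScholes_initial (K r : ℝ) (hK : 0 < K) (hr : 0 < r)
    (ω : ℝ → ℝ → ℝ)
    (hω : ∀ t z, ω t z =
      K * Real.exp z * stdNormalCDF (z / Real.sqrt t + (r + 1 / 2) * Real.sqrt t)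
      - K * Real.exp (-r * t) * stdNormalCDF (z / Real.sqrt t + (r - 1 / 2) * Real.sqrt t)) :
    ∀ z : ℝ, Tendsto (fun t => ω t z) (nhdsWithin 0 (Set.Ioi 0))
      (nhds (max (K * Real.exp z - K) 0)) :=
  logPrice_blackScholes_initial_general K r hK ω hω
end
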